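/- arXiv:2408.13874 — 4 statements merged into one kernel-verified Lean document; each statement's English description precedes it below -/
import Mathlib

section
/- Let n ≥ 1 and 0 ≤ k ≤ n. In the lattice of set partitions of {1,…,n} ordered by refinement (σ ≤ τ iff every block of σ is contained in a block of τ), with minimum element 0̂ the partition into singletons, the sum of the Möbius function values μ(0̂, σ) over all set partitions σ of {1,…,n} with exactly n−k blocks equals (−1)^k times the number of permutations of {1,…,n} whose disjoint cycle decomposition has exactly n−k cycles (fixed points counted as cycles). -/
/-!
Send a permutation to the partition of `{1,…,n}` into its cycles, and let `cycleSignSum r` be the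
sum of the signs of the permutations whose cycle partition is `r`. The permutations whose cycle
partition refines a non-discrete `r` are exactly those preserving every block of `r`; left
multiplication by a transposition inside a block permutes them and flips signs, so their signs
sum to zero. Hence `cycleSignSum` obeys the Möbius recursion, and `μ = cycleSignSum`. A
permutation with `n - k` cycles has sign `(-1)^k`, which gives the formula.
-/

open Equiv Equiv.Perm Set

instance Setoid.finite {α : Type*} [Finite α] : Finite (Setoid α) :=
  Finite.of_injective (fun r : Setoid α => ⇑r) fun _ _ h => Setoid.eq_iff_rel_eq.2 h

theorem finsum_mem_fiberwise {α β M : Type*} [Finite α] [Finite β] [AddCommMonoid M]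
    (g : α → β) (t : Set β) (f : α → M) :
    ∑ᶠ b ∈ t, ∑ᶠ a ∈ g ⁻¹' {b}, f a = ∑ᶠ a ∈ g ⁻¹' t, f a := by
  rw [← biUnion_preimage_singleton,
    finsum_mem_biUnion (pairwiseDisjoint_fiber g t) t.toFinite fun _ _ => Set.toFinite _]

theorem eq_of_eq_neg_finsum_Iio {α β : Type*} [PartialOrder α] [OrderBot α] [WellFoundedLT α]
    [AddCommGroup β] {μ ν : α → β} (hbot : μ ⊥ = ν ⊥)
    (hμ : ∀ a ≠ ⊥, μ a = -∑ᶠ b ∈ Iio a, μ b) (hν : ∀ a ≠ ⊥, ν a = -∑ᶠ b ∈ Iio a, ν b) :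
    μ = ν := by
  funext a
  induction a using WellFoundedLT.induction with
  | ind a ih =>
    rcases eq_or_ne a ⊥ with rfl | ha
    · exact hbot
    · rw [hμ a ha, hν a ha, finsum_mem_congr (s := Iio a) rfl fun b hb => ih b hb]

theorem finsum_mem_const {α M : Type*} [AddCommMonoid M] (s : Set α) (c : M) :
    ∑ᶠ _ ∈ s, c = s.ncard • c := by
  obtain hs | hs := s.infinite_or_finite
  · rw [hs.ncard, zero_smul]
    by_cases hc : c = 0
    · simp [hc]
    · exact finsum_mem_eq_zero_of_infinite (by simpa [Function.support_const hc])
  · rw [finsum_mem_eq_finite_toFinset_sum _ hs, Finset.sum_const, ncard_eq_toFinset_card s hs]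

namespace Equiv.Perm

variable {α : Type*}

theorem sameCycle_setoid_le_iff [Finite α] {π : Perm α} {r : Setoid α} :
    SameCycle.setoid π ≤ r ↔ ∀ x, r x (π x) := by
  refine ⟨fun h x => h ⟨1, by simp⟩, fun h x y hxy => ?_⟩
  have hpow : ∀ i : ℕ, r x ((π ^ i) x) := by
    intro i
    induction i with
    | zero => exact r.refl x
    | succ i ih => exact r.trans ih (by rw [pow_succ', mul_apply]; exact h _)
  obtain ⟨i, rfl⟩ := hxy.exists_nat_pow_eq
  exact hpow i

theorem sameCycle_setoid_eq_bot_iff [Finite α] {π : Perm α} :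
    SameCycle.setoid π = ⊥ ↔ π = 1 := by
  rw [← le_bot_iff, sameCycle_setoid_le_iff, Setoid.bot_def, Perm.ext_iff]
  exact forall_congr' fun x => eq_comm

variable [Fintype α] [DecidableEq α]

theorem finsum_mem_sign_eq_zero_of_swap_mul_mem {S : Set (Perm α)} {x y : α} (hxy : x ≠ y)
    (hS : ∀ π ∈ S, swap x y * π ∈ S) : ∑ᶠ π ∈ S, (sign π : ℤ) = 0 := by
  have hinv : ∀ π : Perm α, swap x y * (swap x y * π) = π := fun π => by
    rw [← mul_assoc, swap_mul_self, one_mul]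
  have hbij : BijOn (swap x y * ·) S S :=
    ⟨hS, fun π _ σ _ h => by simpa [hinv] using congrArg (swap x y * ·) h,
      fun π hπ => ⟨_, hS π hπ, hinv π⟩⟩
  have hneg : ∑ᶠ π ∈ S, (sign π : ℤ) = -∑ᶠ π ∈ S, (sign π : ℤ) := by
    rw [← finsum_mem_neg_distrib _ S.toFinite]
    refine finsum_mem_eq_of_bijOn _ hbij fun π _ => ?_
    simp [sign_swap hxy]
  omega

def cycleFactorOrFixedPoint (π : Perm α) (x : α) :
    π.cycleFactorsFinset ⊕ {x // x ∉ π.support} :=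
  if h : x ∈ π.support then .inl ⟨π.cycleOf x, cycleOf_mem_cycleFactorsFinset_iff.2 h⟩
  else .inr ⟨x, h⟩

theorem sameCycle_iff_eq_of_notMem_support {π : Perm α} {x y : α} (hx : x ∉ π.support) :
    π.SameCycle x y ↔ x = y :=
  ⟨fun h => h.eq_of_left (notMem_support.1 hx), fun h => h ▸ SameCycle.refl _ _⟩

theorem cycleFactorOrFixedPoint_eq_iff {π : Perm α} {x y : α} :
    π.cycleFactorOrFixedPoint x = π.cycleFactorOrFixedPoint y ↔ π.SameCycle x y := by
  unfold cycleFactorOrFixedPoint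
  by_cases hx : x ∈ π.support <;> by_cases hy : y ∈ π.support <;>
    simp only [hx, hy, dite_true, dite_false, Sum.inl.injEq, Sum.inr.injEq, reduceCtorEq,
      false_iff, Subtype.ext_iff]
  · exact (sameCycle_iff_cycleOf_eq_of_mem_support hx hy).symm
  · exact fun h => hy (h.mem_support_iff.1 hx)
  · exact fun h => hx (h.mem_support_iff.2 hy)
  · exact (sameCycle_iff_eq_of_notMem_support hx).symm

theorem cycleFactorOrFixedPoint_surjective (π : Perm α) :
    Function.Surjective π.cycleFactorOrFixedPoint := by
  rintro (⟨c, hc⟩ | ⟨x, hx⟩)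
  · obtain ⟨x, hxc⟩ := (mem_cycleFactorsFinset_iff.1 hc).1.nonempty_support
    have hx : x ∈ π.support := mem_cycleFactorsFinset_support_le hc hxc
    exact ⟨x, by simp [cycleFactorOrFixedPoint, hx, cycle_is_cycleOf hxc hc]⟩
  · exact ⟨x, by simp [cycleFactorOrFixedPoint, hx]⟩

theorem nat_card_quotient_sameCycle (π : Perm α) :
    Nat.card (Quotient (SameCycle.setoid π)) =
      π.cycleType.card + (Fintype.card α - π.support.card) := by
  have hker : SameCycle.setoid π = Setoid.ker π.cycleFactorOrFixedPoint :=
    Setoid.ext fun _ _ => cycleFactorOrFixedPoint_eq_iff.symm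
  rw [hker, Nat.card_congr (Setoid.quotientKerEquivOfSurjective _
    π.cycleFactorOrFixedPoint_surjective), Nat.card_sum, Nat.card_eq_fintype_card,
    Fintype.card_coe, cycleType, Multiset.card_map, Nat.card_eq_fintype_card,
    Fintype.card_subtype_compl, Fintype.card_coe]
  rfl

theorem sign_eq_neg_one_pow_sub_nat_card_quotient_sameCycle (π : Perm α) :
    (sign π : ℤ) = (-1) ^ (Fintype.card α - Nat.card (Quotient (SameCycle.setoid π))) := by
  have hsupp : π.support.card ≤ Fintype.card α := π.support.card_le_univ
  have hcard : 2 * π.cycleType.card ≤ π.support.card := by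
    rw [← sum_cycleType, mul_comm]
    exact Multiset.card_nsmul_le_sum fun _ => two_le_of_mem_cycleType
  have hexp : π.support.card + π.cycleType.card =
      (Fintype.card α - Nat.card (Quotient (SameCycle.setoid π))) + 2 * π.cycleType.card := by
    rw [nat_card_quotient_sameCycle]; omega
  rw [sign_of_cycleType, sum_cycleType, hexp, pow_add, pow_mul]
  simp

noncomputable def cycleSignSum (r : Setoid α) : ℤ :=
  ∑ᶠ π ∈ SameCycle.setoid ⁻¹' {r}, (sign π : ℤ)

theorem cycleSignSum_bot : cycleSignSum (⊥ : Setoid α) = 1 := by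
  have hfiber : SameCycle.setoid ⁻¹' {(⊥ : Setoid α)} = {1} :=
    Set.ext fun _ => sameCycle_setoid_eq_bot_iff
  rw [cycleSignSum, hfiber, finsum_mem_singleton, sign_one, Units.val_one]

theorem finsum_mem_sign_sameCycle_setoid_le_eq_zero {r : Setoid α} (hr : r ≠ ⊥) :
    ∑ᶠ π ∈ SameCycle.setoid ⁻¹' Iic r, (sign π : ℤ) = 0 := by
  obtain ⟨x, y, hrxy, hxy⟩ : ∃ x y, r x y ∧ x ≠ y := by
    by_contra! h
    exact hr (le_bot_iff.1 fun x y hrxy => (Setoid.bot_def ▸ h x y hrxy : _))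
  have hswap : ∀ z, r z (swap x y z) := fun z => by
    rcases eq_or_ne z x with rfl | hzx
    · simpa using hrxy
    rcases eq_or_ne z y with rfl | hzy
    · simpa using r.symm hrxy
    · rw [swap_apply_of_ne_of_ne hzx hzy]
  refine finsum_mem_sign_eq_zero_of_swap_mul_mem hxy fun π hπ => ?_
  simp only [mem_preimage, mem_Iic, sameCycle_setoid_le_iff, mul_apply] at hπ ⊢
  exact fun z => r.trans (hπ z) (hswap _)

theorem cycleSignSum_eq_neg_finsum_Iio {r : Setoid α} (hr : r ≠ ⊥) :
    cycleSignSum r = -∑ᶠ s ∈ Iio r, cycleSignSum s := by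
  have hIic : ∑ᶠ s ∈ Iic r, cycleSignSum s = 0 :=
    (finsum_mem_fiberwise _ _ _).trans (finsum_mem_sign_sameCycle_setoid_le_eq_zero hr)
  rw [← Iio_insert, finsum_mem_insert _ self_notMem_Iio (toFinite _)] at hIic
  exact eq_neg_of_add_eq_zero_left hIic

end Equiv.Perm

theorem stmt0_general (n k : ℕ) (hk : k ≤ n)
    (μ : Setoid (Fin n) → ℤ)
    (hbot : μ ⊥ = 1)
    (hrec : ∀ σ : Setoid (Fin n), σ ≠ ⊥ →
      μ σ = -∑ᶠ τ ∈ {τ : Setoid (Fin n) | τ < σ}, μ τ) :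
    (∑ᶠ σ ∈ {σ : Setoid (Fin n) | Nat.card (Quotient σ) = n - k}, μ σ)
      = (-1) ^ k *
        (Nat.card {π : Equiv.Perm (Fin n) //
          π.cycleType.card + (n - π.support.card) = n - k} : ℤ) := by
  have hμ : μ = cycleSignSum :=
    eq_of_eq_neg_finsum_Iio (hbot.trans cycleSignSum_bot.symm) hrec
      fun _ => cycleSignSum_eq_neg_finsum_Iio
  have hsign : ∀ π ∈ SameCycle.setoid ⁻¹' {σ : Setoid (Fin n) | Nat.card (Quotient σ) = n - k},
      (sign π : ℤ) = (-1) ^ k := fun π hπ => by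
    rw [sign_eq_neg_one_pow_sub_nat_card_quotient_sameCycle, mem_preimage.1 hπ,
      Fintype.card_fin, Nat.sub_sub_self hk]
  have hcount : SameCycle.setoid ⁻¹' {σ : Setoid (Fin n) | Nat.card (Quotient σ) = n - k} =
      {π : Perm (Fin n) | π.cycleType.card + (n - π.support.card) = n - k} := by
    ext π
    simp [nat_card_quotient_sameCycle]
  simp only [hμ, cycleSignSum]
  rw [finsum_mem_fiberwise, finsum_mem_congr rfl hsign, finsum_mem_const, hcount,
    ← Nat.card_coe_set_eq, nsmul_eq_mul, mul_comm]
  rfl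

/-- Let `n ≥ 1` and `0 ≤ k ≤ n`.  In the lattice of set partitions of
`{1,…,n}` (modelled as setoids on `Fin n`, ordered by refinement, with minimum element
`⊥` the partition into singletons), suppose `μ` is the Möbius function, i.e. `μ ⊥ = 1`
and `μ σ = −Σ_{τ < σ} μ τ` for `σ ≠ ⊥`.  Then the sum of `μ σ` over all partitions `σ`
with exactly `n − k` blocks equals `(−1)^k` times the number of permutations of
`{1,…,n}` having exactly `n − k` disjoint cycles (fixed points counted as cycles). -/
theorem stmt0 (n k : ℕ) (hn : 1 ≤ n) (hk : k ≤ n)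
    (μ : Setoid (Fin n) → ℤ)
    (hbot : μ ⊥ = 1)
    (hrec : ∀ σ : Setoid (Fin n), σ ≠ ⊥ →
      μ σ = -∑ᶠ τ ∈ {τ : Setoid (Fin n) | τ < σ}, μ τ) :
    (∑ᶠ σ ∈ {σ : Setoid (Fin n) | Nat.card (Quotient σ) = n - k}, μ σ)
      = (-1) ^ k *
        (Nat.card {π : Equiv.Perm (Fin n) //
          π.cycleType.card + (n - π.support.card) = n - k} : ℤ) :=
  stmt0_general n k hk μ hbot hrec
end

section
/- Let R be a commutative ring, let n ≥ 0, and let t, x_1, …, x_{n+1} ∈ R. Then t^n = Σ_{k=0}^{n} h_{n−k}(x_1, …, x_{k+1}) · Π_{i=1}^{k} (t − x_i). -/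
/-!
Multiplying the identity for `n` by `t = (t - x k) + x k` turns the `k`-th term into a
`(k+1)`-st Newton term plus `x k` times the `k`-th one, and the recurrence
`h_{j+1}(x₀,…,x_k) = h_{j+1}(x₀,…,x_{k-1}) + x_k h_j(x₀,…,x_k)` regroups the result into
the identity for `n + 1`. In other words, `h_{n-k}(x₀,…,x_k)` is the `k`-th divided difference
of `t ↦ tⁿ`, and the identity is Newton interpolation of `tⁿ` at the nodes `x₀,…,xₙ`.
-/

open Finset

/-- Complete homogeneous symmetric polynomial evaluated at a list of ring elements:
`hpoly j [a₁,…,a_r]` is the sum over weakly increasing tuples of length `j` of the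
corresponding products, with `hpoly 0 l = 1` (even for the empty list). -/
def hpoly {R : Type*} [CommSemiring R] : ℕ → List R → R
  | 0, _ => 1
  | _ + 1, [] => 0
  | j + 1, a :: l => hpoly (j + 1) l + a * hpoly j (a :: l)
  termination_by j l => (j, l.length)

section CommSemiring

variable {R : Type*} [CommSemiring R]

theorem hpoly_zero_left (l : List R) : hpoly 0 l = 1 := by
  simp [hpoly]

theorem hpoly_succ_nil (j : ℕ) : hpoly (j + 1) ([] : List R) = 0 := by
  simp [hpoly]

theorem hpoly_succ_append_singleton (j : ℕ) (l : List R) (a : R) :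
    hpoly (j + 1) (l ++ [a]) = hpoly (j + 1) l + a * hpoly j (l ++ [a]) := by
  induction j generalizing l with
  | zero =>
    induction l with
    | nil => simp [hpoly]
    | cons b l ih => simp only [List.cons_append, hpoly] at *; rw [ih]; ring
  | succ j ihj =>
    induction l with
    | nil => simp [hpoly]
    | cons b l ihl =>
      have h := ihj (b :: l)
      simp only [List.cons_append, hpoly] at *
      rw [ihl]
      nth_rewrite 1 [h]
      ring

theorem hpoly_succ_map_range_succ (x : ℕ → R) (j k : ℕ) :
    hpoly (j + 1) ((List.range (k + 1)).map x) =
      hpoly (j + 1) ((List.range k).map x) + x k * hpoly j ((List.range (k + 1)).map x) := by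
  rw [List.range_succ, List.map_append, List.map_singleton, hpoly_succ_append_singleton]

theorem sum_hpoly_map_range_mul_succ (x f : ℕ → R) (n : ℕ) :
    ∑ k ∈ range (n + 2), hpoly (n + 1 - k) ((List.range (k + 1)).map x) * f k =
      ∑ k ∈ range (n + 1), hpoly (n - k) ((List.range (k + 1)).map x) * (f (k + 1) + x k * f k) := by
  have recurrence : ∀ k ∈ range (n + 1),
      hpoly (n + 1 - k) ((List.range (k + 1)).map x) * f k =
        hpoly (n + 1 - k) ((List.range k).map x) * f k +
          hpoly (n - k) ((List.range (k + 1)).map x) * (x k * f k) := by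
    intro k hk
    rw [Nat.sub_add_comm (Nat.lt_succ_iff.mp (mem_range.mp hk)), hpoly_succ_map_range_succ]
    ring
  have shift : ∑ k ∈ range (n + 1), hpoly (n + 1 - k) ((List.range k).map x) * f k + f (n + 1) =
      ∑ k ∈ range (n + 1), hpoly (n - k) ((List.range (k + 1)).map x) * f (k + 1) := by
    rw [sum_range_succ', sum_range_succ]
    simp [hpoly_succ_nil, hpoly_zero_left]
  rw [sum_range_succ, Nat.sub_self, hpoly_zero_left, one_mul, sum_congr rfl recurrence,
    sum_add_distrib, add_right_comm, shift, ← sum_add_distrib]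
  simp only [mul_add]

end CommSemiring

/-- for any commutative ring `R`, `t ∈ R` and elements
`x 0, …, x n` of `R` (playing the role of `x_1, …, x_{n+1}`),
`t^n = Σ_{k=0}^{n} h_{n−k}(x_1, …, x_{k+1}) · Π_{i=1}^{k} (t − x_i)`. -/
theorem stmt6 (R : Type*) [CommRing R] (n : ℕ) (t : R) (x : ℕ → R) :
    t ^ n =
      ∑ k ∈ range (n + 1),
        hpoly (n - k) ((List.range (k + 1)).map x) * ∏ i ∈ range k, (t - x i) := by
  induction n with
  | zero => simp [hpoly_zero_left]
  | succ n ih =>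
    have t_mul_prod : ∀ k, t * ∏ i ∈ range k, (t - x i) =
        ∏ i ∈ range (k + 1), (t - x i) + x k * ∏ i ∈ range k, (t - x i) := by
      intro k
      rw [prod_range_succ]
      ring
    rw [sum_hpoly_map_range_mul_succ, pow_succ', ih, mul_sum]
    refine sum_congr rfl fun k _ => ?_
    rw [mul_left_comm, t_mul_prod]
end

section
/- For all integers m ≥ 2 and 0 ≤ k ≤ n, the following identity holds in ℤ[q]: Σ_{i=0}^{n−k} binom(n,i) · (q·[m]_q)^{n−k−i} · h_{(n−i)−k}([1]_{q^m}, [2]_{q^m}, …, [k]_{q^m}) = h_{n−k}([1]_q, [m+1]_q, [2m+1]_q, …, [km+1]_q), where [l]_{q^m} denotes the q-integer [l] with q replaced by q^m. -/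
open Finset

/-- The q-integer `[l]_q = 1 + q + … + q^{l-1}` in `ℤ[q]`. -/
noncomputable def qint (l : ℕ) : Polynomial ℤ := ∑ i ∈ range l, Polynomial.X ^ i

/-- The q-integer `[l]` with `q` replaced by `q^m`, i.e. `[l]_{q^m} = Σ_{i<l} q^{m·i}`. -/
noncomputable def qintPow (l e : ℕ) : Polynomial ℤ := ∑ i ∈ range l, Polynomial.X ^ (e * i)

/-!
Since `[jm+1]_q = 1 + q[m]_q · [j]_{q^m}`, the right-hand side is `h_{n-k}` of the shifted
list `1 + x·b_0, …, 1 + x·b_k` with `x = q[m]_q`, `b_j = [j]_{q^m}` and `b_0 = 0`.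
Expanding a complete homogeneous polynomial of `r` shifted variables,
`h_d(1 + c_1, …, 1 + c_r) = Σ_i C(d + r - 1, i) h_{d-i}(c)`, and pulling `x` out of
`h_{d-i}(x·b) = x^{d-i} h_{d-i}(b)` gives the left-hand side.
-/

theorem sum_range_choose_succ_mul {R : Type*} [CommSemiring R] (N n : ℕ) (f : ℕ → R) :
    ∑ i ∈ range (n + 1), ((N + 1).choose i : R) * f i =
      ∑ i ∈ range (n + 1), (N.choose i : R) * f i +
        ∑ i ∈ range n, (N.choose i : R) * f (i + 1) := by
  rw [sum_range_succ', sum_range_succ' (fun i => (N.choose i : R) * f i)]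
  simp only [Nat.choose_succ_succ, Nat.cast_add, add_mul, sum_add_distrib, Nat.choose_zero_right]
  ring

namespace hpoly

variable {R : Type*} [CommSemiring R]

@[simp]
theorem zero_left (l : List R) : hpoly 0 l = 1 := by
  simp [hpoly]

@[simp]
theorem succ_nil (j : ℕ) : hpoly (j + 1) ([] : List R) = 0 := by
  simp [hpoly]

theorem succ_cons (j : ℕ) (a : R) (l : List R) :
    hpoly (j + 1) (a :: l) = hpoly (j + 1) l + a * hpoly j (a :: l) := by
  rw [hpoly]

theorem zero_cons (j : ℕ) (l : List R) : hpoly j ((0 : R) :: l) = hpoly j l := by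
  cases j with
  | zero => simp
  | succ j => simp [succ_cons]

theorem map_mul_left (x : R) (l : List R) (j : ℕ) :
    hpoly j (l.map (x * ·)) = x ^ j * hpoly j l := by
  induction l generalizing j with
  | nil => cases j <;> simp
  | cons a l ih =>
    induction j with
    | zero => simp
    | succ j ihj =>
      simp only [List.map_cons] at ihj ⊢
      rw [succ_cons, succ_cons, ih, ihj]
      ring

theorem sum_choose_mul_succ_cons (N d : ℕ) (a : R) (l : List R) :
    ∑ i ∈ range (d + 2), (N.choose i : R) * hpoly (d + 1 - i) (a :: l) =
      ∑ i ∈ range (d + 2), (N.choose i : R) * hpoly (d + 1 - i) l +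
        a * ∑ i ∈ range (d + 1), (N.choose i : R) * hpoly (d - i) (a :: l) := by
  rw [sum_range_succ, sum_range_succ _ (d + 1), mul_sum]
  have hcons : ∀ i ∈ range (d + 1), (N.choose i : R) * hpoly (d + 1 - i) (a :: l) =
      (N.choose i : R) * hpoly (d + 1 - i) l + a * ((N.choose i : R) * hpoly (d - i) (a :: l)) := by
    intro i hi
    rw [Nat.sub_add_comm (Nat.lt_succ_iff.mp (mem_range.mp hi)), succ_cons]
    ring
  rw [sum_congr rfl hcons, sum_add_distrib]
  simp only [Nat.sub_self, zero_left]
  ring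

theorem map_one_add (l : List R) (d : ℕ) :
    hpoly d (l.map (1 + ·)) =
      ∑ i ∈ range (d + 1), ((d + l.length - 1).choose i : R) * hpoly (d - i) l := by
  induction l generalizing d with
  | nil =>
    cases d with
    | zero => simp
    | succ d =>
      rw [sum_range_succ, sum_eq_zero fun i hi => ?_]
      · simp
      · rw [Nat.sub_add_comm (Nat.lt_succ_iff.mp (mem_range.mp hi))]
        simp
  | cons a l ih =>
    induction d with
    | zero => simp
    | succ d ihd =>
      -- the recursion `succ_cons` of the left side becomes Pascal's rule on the right side
      simp only [List.map_cons, List.length_cons] at ihd ⊢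
      rw [succ_cons, ih, ihd, show d + 1 + (l.length + 1) - 1 = d + l.length + 1 by omega,
        sum_range_choose_succ_mul, sum_choose_mul_succ_cons,
        show d + 1 + l.length - 1 = d + l.length by omega,
        show d + (l.length + 1) - 1 = d + l.length by omega]
      simp only [Nat.reduceSubDiff]
      ring

theorem map_one_add_mul (x : R) (l : List R) (d : ℕ) :
    hpoly d (l.map (fun c => 1 + x * c)) =
      ∑ i ∈ range (d + 1),
        ((d + l.length - 1).choose i : R) * x ^ (d - i) * hpoly (d - i) l := by
  rw [show l.map (fun c => 1 + x * c) = (l.map (x * ·)).map (1 + ·) by simp [List.map_map],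
    map_one_add, List.length_map]
  simp only [map_mul_left, mul_assoc]

end hpoly

theorem qint_add (a b : ℕ) : qint (a + b) = qint a + Polynomial.X ^ a * qint b := by
  simp only [qint, sum_range_add, mul_sum, pow_add]

theorem qint_mul_add_one (m j : ℕ) :
    qint (j * m + 1) = 1 + Polynomial.X * qint m * qintPow j m := by
  induction j with
  | zero => simp [qint, qintPow]
  | succ j ih =>
    rw [show (j + 1) * m + 1 = (j * m + 1) + m by ring, qint_add, ih]
    simp only [qintPow, sum_range_succ]
    ring

theorem stmt10_general (m n k : ℕ) (hk : k ≤ n) :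
    ∑ i ∈ range (n - k + 1),
        (n.choose i : Polynomial ℤ) * (Polynomial.X * qint m) ^ (n - k - i) *
          hpoly ((n - i) - k) ((List.range k).map fun j => qintPow (j + 1) m)
      = hpoly (n - k) ((List.range (k + 1)).map fun j => qint (j * m + 1)) := by
  have hlist : (List.range (k + 1)).map (fun j => qint (j * m + 1)) =
      (0 :: (List.range k).map fun j => qintPow (j + 1) m).map
        (fun c => 1 + Polynomial.X * qint m * c) := by
    rw [List.range_succ_eq_map, List.map_cons, List.map_cons, List.map_map, List.map_map]
    simp only [qint_mul_add_one, qintPow, Function.comp_def, range_zero, sum_empty, mul_zero,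
      add_zero]
  rw [hlist, hpoly.map_one_add_mul, List.length_cons, List.length_map, List.length_range,
    show n - k + (k + 1) - 1 = n by omega]
  refine sum_congr rfl fun i _ => ?_
  rw [hpoly.zero_cons, Nat.sub_right_comm]

/-- for `m ≥ 2` and `0 ≤ k ≤ n`, in `ℤ[q]`,
`Σ_{i=0}^{n−k} binom(n,i) · (q·[m]_q)^{n−k−i} · h_{(n−i)−k}([1]_{q^m}, …, [k]_{q^m})
  = h_{n−k}([1]_q, [m+1]_q, [2m+1]_q, …, [km+1]_q)`. -/
theorem stmt10 (m n k : ℕ) (hm : 2 ≤ m) (hk : k ≤ n) :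
    ∑ i ∈ range (n - k + 1),
        (n.choose i : Polynomial ℤ) * (Polynomial.X * qint m) ^ (n - k - i) *
          hpoly ((n - i) - k) ((List.range k).map fun j => qintPow (j + 1) m)
      = hpoly (n - k) ((List.range (k + 1)).map fun j => qint (j * m + 1)) :=
  stmt10_general m n k hk
end

section
/- Fix integers m ≥ 2 and n ≥ 1. Let L̄(m,n) be the collection of all linear subspaces of ℂ^n that can be written as the intersection of a finite (possibly empty) family of hyperplanes from the set of hyperplanes {v ∈ ℂ^n : ζ v_i = v_j} for 1 ≤ i < j ≤ n and ζ an m-th root of unity (the empty intersection being ℂ^n itself), partially ordered by reverse inclusion. Then L̄(m,n) is order-isomorphic to the poset of colored set partitions of type (m̄,n) ordered by refinement (σ ≤ τ iff every block of σ is contained in a block of τ). Consequently, for every 0 ≤ k ≤ n, the number of subspaces in L̄(m,n) of dimension k equals S̄(m,n,k). -/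
open Finset

/-- The colored ground set `X_{m,n} = {0} ⊔ ({1,…,n} × ℤ/mℤ)`, with `none` as basepoint. -/
abbrev ColoredSet (m n : ℕ) := Option (Fin n × ZMod m)

/-- The action of `c ∈ ℤ/mℤ` on `X_{m,n}`: fixes the basepoint and shifts colors. -/
def shift {m n : ℕ} (c : ZMod m) : ColoredSet m n → ColoredSet m n :=
  Option.map fun p => (p.1, p.2 + c)

/-- A setoid on `X_{m,n}` is a colored set partition of type `(m,n)` if the `ℤ/mℤ`-action
maps blocks to blocks and the induced action on the blocks not containing the basepoint
is free. -/
def IsColored {m n : ℕ} (σ : Setoid (ColoredSet m n)) : Prop :=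
  (∀ (c : ZMod m) (x y : ColoredSet m n), σ.r x y → σ.r (shift c x) (shift c y)) ∧
  (∀ (c : ZMod m) (x : ColoredSet m n), ¬ σ.r x none → σ.r (shift c x) x → c = 0)

/-- A colored set partition of type `(m̄,n)`: a colored set partition of type `(m,n)`
whose zero block is not `{0} ∪ ({i} × ℤ/mℤ)` for any `i`. -/
def IsBarColored {m n : ℕ} (σ : Setoid (ColoredSet m n)) : Prop :=
  IsColored σ ∧
  ∀ i : Fin n,
    {x : ColoredSet m n | σ.r x none} ≠
      insert none {x : ColoredSet m n | ∃ c : ZMod m, x = some (i, c)}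

/-- `S̄(m,n,k)`: the number of colored set partitions of type `(m̄,n)` with `km+1`
blocks. -/
noncomputable def SbarCount (m n k : ℕ) : ℕ :=
  Nat.card {σ : Setoid (ColoredSet m n) //
    IsBarColored σ ∧ Nat.card (Quotient σ) = k * m + 1}

/-- The reflecting hyperplanes of `G(m,m,n)`: the hyperplanes `ζ X_i = X_j` for `i < j`
and `ζ^m = 1` (no coordinate hyperplanes). -/
def IsBarRefHyp (m n : ℕ) (H : Submodule ℂ (Fin n → ℂ)) : Prop :=
  ∃ (i j : Fin n) (ζ : ℂ), i < j ∧ ζ ^ m = 1 ∧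
    H = LinearMap.ker
      (ζ • (LinearMap.proj i : (Fin n → ℂ) →ₗ[ℂ] ℂ) - LinearMap.proj j)

/-- The intersection lattice `L̄(m,n)`: all subspaces of `ℂ^n` that are intersections of
finitely many (possibly zero) hyperplanes `ζ X_i = X_j`. -/
def BarInterLattice (m n : ℕ) : Set (Submodule ℂ (Fin n → ℂ)) :=
  {W | ∃ s : Finset (Submodule ℂ (Fin n → ℂ)),
    (∀ H ∈ s, IsBarRefHyp m n H) ∧ W = s.inf id}

/-!
Send the point `(i, c)` of `X_{m,n}` to the linear form `v ↦ ζ^c v_i` (with `ζ = e^{2πi/m}`)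
and the basepoint to `0`. A subspace `W` induces the partition of `X_{m,n}` by the restrictions
of these forms to `W`, and a partition `σ` induces the subspace on which the forms are constant
on blocks. These maps form an antitone Galois connection, and they restrict to mutually
inverse bijections between `L̄(m,n)` and the colored partitions of type `(m̄,n)`:
* a hyperplane `ζ^c X_i = X_j` is exactly where the forms of `(i, c)` and `(j, 0)` agree;
* if the zero block of the partition of `W ∈ L̄(m,n)` were `{0} ∪ {i} × ℤ/mℤ`, a vector of `W`
  with all coordinates but the `i`-th nonzero would force `e_i ∈ W`, although `v_i = 0` on `W`;
* conversely, for a partition of type `(m̄,n)` the relations between distinct coordinates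
  already force the coordinates in the zero block to vanish, so its subspace is an
  intersection of hyperplanes.
For the count, the subspace of `σ` is identified with the functions on the orbits of `ℤ/mℤ`
on the nonzero blocks, and these orbits are free; so dimension `k` means `km + 1` blocks.
-/

lemma Submodule.exists_mem_forall_apply_ne_zero {K ι : Type*} [Field K] [Infinite K]
    [Finite ι] {W : Submodule K (ι → K)} {p : ι → Prop} (h : ∀ j, p j → ∃ v ∈ W, v j ≠ 0) :
    ∃ u ∈ W, ∀ j, p j → u j ≠ 0 := by
  let q : {j // p j} → Submodule K W := fun j => LinearMap.ker ((LinearMap.proj j.1).comp W.subtype)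
  have hq : ∀ j, q j ≠ ⊤ := by
    intro j htop
    obtain ⟨v, hv, hvj⟩ := h j.1 j.2
    exact hvj (LinearMap.mem_ker.1 (htop ▸ Submodule.mem_top : (⟨v, hv⟩ : W) ∈ q j))
  obtain ⟨u, hu⟩ : ∃ u : W, ∀ j, u ∉ q j := by
    by_contra! hcov
    obtain ⟨j, hj⟩ := Subspace.exists_eq_top_of_iUnion_eq_univ
      (Set.iUnion_eq_univ_iff.2 fun u => (hcov u : ∃ j, u ∈ (q j : Set W)))
    exact hq j hj
  exact ⟨u, u.2, fun j hj => hu ⟨j, hj⟩⟩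

section Shift

variable {m n : ℕ}

@[simp] lemma shift_none (c : ZMod m) : shift c (none : ColoredSet m n) = none := rfl

@[simp] lemma shift_some (c : ZMod m) (i : Fin n) (d : ZMod m) :
    shift c (some (i, d)) = some (i, d + c) := rfl

@[simp] lemma shift_zero (x : ColoredSet m n) : shift 0 x = x := by
  cases x <;> simp [shift]

lemma shift_shift (c d : ZMod m) (x : ColoredSet m n) :
    shift c (shift d x) = shift (d + c) x := by
  cases x <;> simp [shift, add_assoc]

end Shift

namespace IsColored

variable {m n : ℕ} {σ : Setoid (ColoredSet m n)} (hσ : IsColored σ)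
include hσ

lemma shift_rel_shift {x y : ColoredSet m n} (h : σ.r x y) (c : ZMod m) :
    σ.r (shift c x) (shift c y) :=
  hσ.1 c x y h

lemma shift_rel_iff {x y : ColoredSet m n} {c : ZMod m} :
    σ.r (shift c x) y ↔ σ.r x (shift (-c) y) := by
  refine ⟨fun h => ?_, fun h => ?_⟩
  · simpa [shift_shift] using hσ.shift_rel_shift h (-c)
  · simpa [shift_shift] using hσ.shift_rel_shift h c

lemma shift_rel_none_iff {x : ColoredSet m n} {c : ZMod m} :
    σ.r (shift c x) none ↔ σ.r x none := by
  rw [hσ.shift_rel_iff, shift_none]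

lemma eq_of_rel_of_rel {z : ColoredSet m n} (hz : ¬ σ.r z none) {j : Fin n} {c d : ZMod m}
    (hc : σ.r (some (j, c)) z) (hd : σ.r (some (j, d)) z) : c = d := by
  have hnone : ¬ σ.r (some (j, c)) none := fun h => hz (σ.iseqv.trans (σ.iseqv.symm hc) h)
  have := hσ.2 (d - c) _ hnone (by simpa using σ.iseqv.trans hd (σ.iseqv.symm hc))
  exact (sub_eq_zero.1 this).symm

end IsColored

namespace IsBarColored

variable {m n : ℕ} {σ : Setoid (ColoredSet m n)} (hσ : IsBarColored σ)
include hσ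

lemma exists_ne_rel_none {i : Fin n} {c : ZMod m}
    (h : σ.r (some (i, c)) none) : ∃ j d, j ≠ i ∧ σ.r (some (j, d)) none := by
  by_contra! hno
  refine hσ.2 i (Set.Subset.antisymm ?_ ?_)
  · rintro (_ | ⟨j, d⟩) hx
    · exact Set.mem_insert _ _
    · by_cases hj : j = i
      · exact Or.inr ⟨d, by rw [hj]⟩
      · exact absurd hx (hno j d hj)
  · rintro _ (rfl | ⟨d, rfl⟩)
    · exact σ.iseqv.refl none
    · simpa using hσ.1.shift_rel_none_iff (c := d - c) |>.2 h

end IsBarColored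

namespace ColoredSet

variable {m n : ℕ}

local notation "ψ" => ZMod.stdAddChar

section Forms

variable [NeZero m]

lemma stdAddChar_ne_zero (c : ZMod m) : ψ c ≠ 0 := by
  rw [ZMod.stdAddChar_apply]
  exact Circle.coe_ne_zero _

lemma stdAddChar_pow_eq_one (c : ZMod m) : ψ c ^ m = 1 := by
  rw [← AddChar.map_nsmul_eq_pow, nsmul_eq_mul, ZMod.natCast_self, zero_mul,
    AddChar.map_zero_eq_one]

lemma stdAddChar_eq_one_iff {c : ZMod m} : ψ c = 1 ↔ c = 0 :=
  ZMod.injective_stdAddChar.eq_iff' (AddChar.map_zero_eq_one _)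

lemma exists_stdAddChar_eq {ζ : ℂ} (hζ : ζ ^ m = 1) : ∃ c : ZMod m, ψ c = ζ := by
  have hprim : IsPrimitiveRoot (ψ (1 : ZMod m)) m := by
    have := ZMod.stdAddChar_coe (N := m) 1
    push_cast at this
    rw [this, mul_one]
    exact Complex.isPrimitiveRoot_exp m (NeZero.ne m)
  obtain ⟨i, -, rfl⟩ := hprim.eq_pow_of_pow_eq_one hζ
  exact ⟨i, by rw [← AddChar.map_nsmul_eq_pow, nsmul_one]⟩

noncomputable def colorForm : ColoredSet m n → Module.Dual ℂ (Fin n → ℂ)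
  | none => 0
  | some (i, c) => ψ c • LinearMap.proj i

@[simp] lemma colorForm_none (v : Fin n → ℂ) : colorForm (none : ColoredSet m n) v = 0 := rfl

@[simp] lemma colorForm_some (i : Fin n) (c : ZMod m) (v : Fin n → ℂ) :
    colorForm (some (i, c)) v = ψ c * v i := rfl

lemma colorForm_shift (c : ZMod m) (x : ColoredSet m n) (v : Fin n → ℂ) :
    colorForm (shift c x) v = ψ c * colorForm x v := by
  rcases x with _ | ⟨i, d⟩
  · simp
  · simp [AddChar.map_add_eq_mul, mul_comm, mul_left_comm]

def subspaceOf (σ : Setoid (ColoredSet m n)) : Submodule ℂ (Fin n → ℂ) where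
  carrier := {v | ∀ x y, σ.r x y → colorForm x v = colorForm y v}
  add_mem' ha hb x y h := by simp only [map_add, ha x y h, hb x y h]
  zero_mem' _ _ _ := by simp only [map_zero]
  smul_mem' a v hv x y h := by simp only [map_smul, hv x y h]

def setoidOf (W : Submodule ℂ (Fin n → ℂ)) : Setoid (ColoredSet m n) where
  r x y := ∀ v ∈ W, colorForm x v = colorForm y v
  iseqv := ⟨fun _ _ _ => rfl, fun h v hv => (h v hv).symm,
    fun h₁ h₂ v hv => (h₁ v hv).trans (h₂ v hv)⟩

lemma le_subspaceOf_iff {W : Submodule ℂ (Fin n → ℂ)} {σ : Setoid (ColoredSet m n)} :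
    W ≤ subspaceOf σ ↔ σ ≤ setoidOf W :=
  ⟨fun h => Setoid.le_def.2 fun hxy _ hv => h hv _ _ hxy,
    fun h _ hv _ _ hxy => Setoid.le_def.1 h hxy _ hv⟩

lemma le_subspaceOf_setoidOf (W : Submodule ℂ (Fin n → ℂ)) :
    W ≤ subspaceOf (setoidOf W : Setoid (ColoredSet m n)) :=
  le_subspaceOf_iff.2 le_rfl

lemma le_setoidOf_subspaceOf (σ : Setoid (ColoredSet m n)) : σ ≤ setoidOf (subspaceOf σ) :=
  le_subspaceOf_iff.1 le_rfl

lemma mem_ker_smul_proj_sub_proj {ζ : ℂ} {i j : Fin n} {v : Fin n → ℂ} :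
    v ∈ LinearMap.ker (ζ • (LinearMap.proj i : (Fin n → ℂ) →ₗ[ℂ] ℂ) - LinearMap.proj j) ↔
      ζ * v i = v j := by
  simp [sub_eq_zero]

lemma exists_colorForm_of_isBarRefHyp {H : Submodule ℂ (Fin n → ℂ)} (hH : IsBarRefHyp m n H) :
    ∃ x y : ColoredSet m n, ∀ v, v ∈ H ↔ colorForm x v = colorForm y v := by
  obtain ⟨i, j, ζ, -, hζ, rfl⟩ := hH
  obtain ⟨c, rfl⟩ := exists_stdAddChar_eq hζ
  exact ⟨some (i, c), some (j, 0), fun v => by simp [sub_eq_zero]⟩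

lemma isBarRefHyp_ker_colorForm_sub {i j : Fin n} (hij : i ≠ j) (c d : ZMod m) :
    IsBarRefHyp m n (LinearMap.ker (colorForm (some (i, c)) - colorForm (some (j, d)))) := by
  wlog hlt : i < j generalizing i j c d
  · rw [← LinearMap.ker_neg, neg_sub]
    exact this hij.symm d c (lt_of_le_of_ne (not_lt.1 hlt) hij.symm)
  refine ⟨i, j, ψ (c - d), hlt, stdAddChar_pow_eq_one _, ?_⟩
  rw [← LinearMap.ker_smul _ _ (stdAddChar_ne_zero (-d))]
  congr 1
  refine LinearMap.ext fun v => ?_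
  have h₁ : ψ (c - d) = ψ (-d) * ψ c := by rw [← AddChar.map_add_eq_mul, neg_add_eq_sub]
  have h₂ : ψ (-d) * ψ d = 1 := by rw [← AddChar.map_add_eq_mul, neg_add_cancel,
    AddChar.map_zero_eq_one]
  simp only [LinearMap.smul_apply, LinearMap.sub_apply, colorForm_some, smul_eq_mul,
    LinearMap.proj_apply, h₁]
  linear_combination -v j * h₂

lemma subspaceOf_setoidOf {W : Submodule ℂ (Fin n → ℂ)} (hW : W ∈ BarInterLattice m n) :
    subspaceOf (setoidOf W : Setoid (ColoredSet m n)) = W := by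
  refine le_antisymm ?_ (le_subspaceOf_setoidOf W)
  obtain ⟨s, hs, rfl⟩ := hW
  refine Finset.le_inf fun H hH v hv => ?_
  obtain ⟨x, y, hxy⟩ := exists_colorForm_of_isBarRefHyp (hs H hH)
  exact (hxy v).2 (hv x y fun u hu => (hxy u).1 (Submodule.mem_finsetInf.1 hu H hH))

lemma isColored_setoidOf (W : Submodule ℂ (Fin n → ℂ)) :
    IsColored (setoidOf W : Setoid (ColoredSet m n)) := by
  refine ⟨fun c x y hxy v hv => by rw [colorForm_shift, colorForm_shift, hxy v hv], ?_⟩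
  intro c x hx hcx
  obtain ⟨v, hv, hne⟩ : ∃ v ∈ W, colorForm x v ≠ 0 := by
    by_contra! h
    exact hx fun v hv => by rw [h v hv, colorForm_none]
  have := hcx v hv
  rw [colorForm_shift] at this
  exact stdAddChar_eq_one_iff.1 (mul_eq_right₀ hne |>.1 this)

open scoped Classical in
noncomputable def blockVector (σ : Setoid (ColoredSet m n)) (z : ColoredSet m n) :
    Fin n → ℂ :=
  fun j => if h : ∃ c, σ.r (some (j, c)) z then ψ (-h.choose) else 0

section BlockVector

variable {σ : Setoid (ColoredSet m n)} {z : ColoredSet m n}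

lemma blockVector_apply_of_rel (hσ : IsColored σ) (hz : ¬ σ.r z none) {j : Fin n}
    {c : ZMod m} (h : σ.r (some (j, c)) z) : blockVector σ z j = ψ (-c) := by
  have hex : ∃ c, σ.r (some (j, c)) z := ⟨c, h⟩
  rw [blockVector, dif_pos hex, hσ.eq_of_rel_of_rel hz hex.choose_spec h]

lemma blockVector_apply_of_forall_not_rel {j : Fin n} (h : ∀ c, ¬ σ.r (some (j, c)) z) :
    blockVector σ z j = 0 := by
  rw [blockVector, dif_neg (not_exists.2 h)]

lemma colorForm_blockVector_of_rel (hσ : IsColored σ) (hz : ¬ σ.r z none)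
    {x : ColoredSet m n} {c : ZMod m} (h : σ.r x (shift c z)) :
    colorForm x (blockVector σ z) = ψ c := by
  rcases x with _ | ⟨i, d⟩
  · exact absurd (hσ.shift_rel_none_iff.1 (σ.iseqv.symm h)) hz
  · have h' : σ.r (some (i, d + -c)) z := by
      simpa [shift_shift] using hσ.shift_rel_shift h (-c)
    rw [colorForm_some, blockVector_apply_of_rel hσ hz h', ← AddChar.map_add_eq_mul]
    congr 1
    ring

lemma colorForm_blockVector_of_forall_not_rel (hσ : IsColored σ) {x : ColoredSet m n}
    (h : ∀ c, ¬ σ.r x (shift c z)) : colorForm x (blockVector σ z) = 0 := by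
  rcases x with _ | ⟨i, d⟩
  · rfl
  · refine (colorForm_some i d _).trans (mul_eq_zero_of_right _ ?_)
    refine blockVector_apply_of_forall_not_rel fun c hc => h (d - c) ?_
    simpa using hσ.shift_rel_shift hc (d - c)

lemma blockVector_mem_subspaceOf (hσ : IsColored σ) (hz : ¬ σ.r z none) :
    blockVector σ z ∈ subspaceOf σ := by
  intro x y hxy
  by_cases hx : ∃ c, σ.r x (shift c z)
  · obtain ⟨c, hc⟩ := hx
    rw [colorForm_blockVector_of_rel hσ hz hc,
      colorForm_blockVector_of_rel hσ hz (σ.iseqv.trans (σ.iseqv.symm hxy) hc)]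
  · have hy : ∀ c, ¬ σ.r y (shift c z) := fun c hc => hx ⟨c, σ.iseqv.trans hxy hc⟩
    rw [colorForm_blockVector_of_forall_not_rel hσ (not_exists.1 hx),
      colorForm_blockVector_of_forall_not_rel hσ hy]

lemma colorForm_blockVector_self (hσ : IsColored σ) (hz : ¬ σ.r z none) :
    colorForm z (blockVector σ z) = 1 := by
  rw [colorForm_blockVector_of_rel hσ hz (c := 0) (by rw [shift_zero]),
    AddChar.map_zero_eq_one]

end BlockVector

lemma exists_colorForm_ne_of_not_rel {σ : Setoid (ColoredSet m n)} (hσ : IsColored σ)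
    {x y : ColoredSet m n} (h : ¬ σ.r x y) :
    ∃ v ∈ subspaceOf σ, colorForm x v ≠ colorForm y v := by
  by_cases hx : σ.r x none
  · have hy : ¬ σ.r y none := fun hy => h (σ.iseqv.trans hx (σ.iseqv.symm hy))
    refine ⟨blockVector σ y, blockVector_mem_subspaceOf hσ hy, ?_⟩
    rw [blockVector_mem_subspaceOf hσ hy x none hx, colorForm_blockVector_self hσ hy]
    exact zero_ne_one
  refine ⟨blockVector σ x, blockVector_mem_subspaceOf hσ hx, ?_⟩
  rw [colorForm_blockVector_self hσ hx]
  by_cases hy : ∃ c, σ.r y (shift c x)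
  · obtain ⟨c, hc⟩ := hy
    rw [colorForm_blockVector_of_rel hσ hx hc, ne_comm, Ne, stdAddChar_eq_one_iff]
    rintro rfl
    exact h (σ.iseqv.symm (by simpa using hc))
  · rw [colorForm_blockVector_of_forall_not_rel hσ (not_exists.1 hy)]
    exact one_ne_zero

lemma setoidOf_subspaceOf {σ : Setoid (ColoredSet m n)} (hσ : IsColored σ) :
    setoidOf (subspaceOf σ) = σ := by
  refine le_antisymm (Setoid.le_def.2 fun {x y} hxy => ?_) (le_setoidOf_subspaceOf σ)
  by_contra h
  obtain ⟨v, hv, hne⟩ := exists_colorForm_ne_of_not_rel hσ h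
  exact hne (hxy v hv)

lemma single_mem_of_isBarRefHyp {H : Submodule ℂ (Fin n → ℂ)} (hH : IsBarRefHyp m n H)
    {u : Fin n → ℂ} (hu : u ∈ H) {i : Fin n} (hui : u i = 0) (hu' : ∀ j, j ≠ i → u j ≠ 0) :
    Pi.single i 1 ∈ H := by
  obtain ⟨a, b, ζ, hab, hζ, rfl⟩ := hH
  rw [mem_ker_smul_proj_sub_proj] at hu ⊢
  have hζ0 : ζ ≠ 0 := by rintro rfl; simp [NeZero.ne m] at hζ
  have ha : a ≠ i := by
    rintro rfl
    exact hu' b hab.ne' (by rw [← hu, hui, mul_zero])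
  have hb : b ≠ i := by
    rintro rfl
    exact hu' a hab.ne (by simpa [hui, hζ0] using hu)
  simp [Pi.single_eq_of_ne ha, Pi.single_eq_of_ne hb]

lemma setoidOf_rel_none_iff {W : Submodule ℂ (Fin n → ℂ)} {j : Fin n} {c : ZMod m} :
    (setoidOf W).r (some (j, c)) none ↔ ∀ v ∈ W, v j = 0 := by
  show (∀ v ∈ W, _ = _) ↔ _
  simp [stdAddChar_ne_zero]

lemma isBarColored_setoidOf {W : Submodule ℂ (Fin n → ℂ)} (hW : W ∈ BarInterLattice m n) :
    IsBarColored (setoidOf W : Setoid (ColoredSet m n)) := by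
  refine ⟨isColored_setoidOf W, fun i hbad => ?_⟩
  have zero_block {j : Fin n} : (∀ v ∈ W, v j = 0) ↔ j = i := by
    have := congrArg (some (j, (0 : ZMod m)) ∈ ·) hbad
    simpa [setoidOf_rel_none_iff] using this
  obtain ⟨u, hu, hu'⟩ := W.exists_mem_forall_apply_ne_zero (p := (· ≠ i)) fun j hj => by
    simpa using mt zero_block.1 hj
  obtain ⟨s, hs, rfl⟩ := hW
  have hsingle : Pi.single i (1 : ℂ) ∈ s.inf id := Submodule.mem_finsetInf.2 fun H hH =>
    single_mem_of_isBarRefHyp (hs H hH) (Submodule.mem_finsetInf.1 hu H hH)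
      (zero_block.2 rfl u hu) hu'
  simpa using zero_block.2 rfl _ hsingle

section Nontrivial

variable [Nontrivial (ZMod m)] {σ : Setoid (ColoredSet m n)}

/-- A second coordinate `j` in the zero block relates both `(i, c)` and `(i, c + 1)` to some
`(j, d)`, and `ζ ≠ 1`. -/
lemma apply_eq_zero_of_rel_none (hσ : IsBarColored σ) {v : Fin n → ℂ}
    (hv : ∀ i j c d, i ≠ j → σ.r (some (i, c)) (some (j, d)) →
      colorForm (some (i, c)) v = colorForm (some (j, d)) v)
    {i : Fin n} {c : ZMod m} (h : σ.r (some (i, c)) none) : v i = 0 := by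
  obtain ⟨j, d, hji, hj⟩ := hσ.exists_ne_rel_none h
  have h₀ := hv i j c d hji.symm (σ.iseqv.trans h (σ.iseqv.symm hj))
  have h₁ := hv i j (c + 1) d hji.symm
    (σ.iseqv.trans (by simpa using hσ.1.shift_rel_none_iff (c := 1) |>.2 h) (σ.iseqv.symm hj))
  simp only [colorForm_some, AddChar.map_add_eq_mul] at h₀ h₁
  have hψ : ψ (1 : ZMod m) - 1 ≠ 0 :=
    sub_ne_zero.2 (mt stdAddChar_eq_one_iff.1 one_ne_zero)
  have : ψ c * (ψ (1 : ZMod m) - 1) * v i = 0 := by linear_combination h₁ - h₀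
  simpa [stdAddChar_ne_zero, hψ] using this

lemma mem_subspaceOf_of_forall_ne (hσ : IsBarColored σ) {v : Fin n → ℂ}
    (hv : ∀ i j c d, i ≠ j → σ.r (some (i, c)) (some (j, d)) →
      colorForm (some (i, c)) v = colorForm (some (j, d)) v) :
    v ∈ subspaceOf σ := by
  have hzero : ∀ x, σ.r x none → colorForm x v = 0 := by
    rintro (_ | ⟨i, c⟩) hx
    · rfl
    · rw [colorForm_some, apply_eq_zero_of_rel_none hσ hv hx, mul_zero]
  intro x y hxy
  by_cases hx : σ.r x none
  · rw [hzero x hx, hzero y (σ.iseqv.trans (σ.iseqv.symm hxy) hx)]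
  rcases x with _ | ⟨i, c⟩
  · exact absurd (σ.iseqv.refl none) hx
  rcases y with _ | ⟨j, d⟩
  · exact absurd hxy hx
  by_cases hij : i = j
  · subst hij
    have hy : ¬ σ.r (some (i, d)) none := fun hy => hx (σ.iseqv.trans hxy hy)
    rw [hσ.1.eq_of_rel_of_rel hy hxy (σ.iseqv.refl _)]
  · exact hv i j c d hij hxy

lemma subspaceOf_mem_barInterLattice (hσ : IsBarColored σ) :
    subspaceOf σ ∈ BarInterLattice m n := by
  classical
  let pairs := (Finset.univ : Finset ((Fin n × ZMod m) × (Fin n × ZMod m))).filter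
    fun p => p.1.1 ≠ p.2.1 ∧ σ.r (some p.1) (some p.2)
  refine ⟨pairs.image fun p => LinearMap.ker (colorForm (some p.1) - colorForm (some p.2)),
    ?_, le_antisymm (Finset.le_inf ?_) fun v hv => mem_subspaceOf_of_forall_ne hσ ?_⟩
  · simp only [Finset.mem_image, Finset.mem_filter, pairs]
    rintro _ ⟨⟨⟨i, c⟩, ⟨j, d⟩⟩, ⟨-, hij, -⟩, rfl⟩
    exact isBarRefHyp_ker_colorForm_sub hij c d
  · simp only [Finset.mem_image, Finset.mem_filter, pairs]
    rintro _ ⟨p, ⟨-, -, hp⟩, rfl⟩ v hv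
    rw [id, LinearMap.mem_ker, LinearMap.sub_apply, sub_eq_zero]
    exact hv _ _ hp
  · intro i j c d hij hrel
    have hmem := Submodule.mem_finsetInf.1 hv _
      (Finset.mem_image_of_mem _ (show ((i, c), (j, d)) ∈ pairs from
        Finset.mem_filter.2 ⟨Finset.mem_univ _, hij, hrel⟩))
    rwa [id, LinearMap.mem_ker, LinearMap.sub_apply, sub_eq_zero] at hmem

end Nontrivial

end Forms

section FreeBlock

variable {σ : Setoid (ColoredSet m n)}

abbrev FreeBlock (σ : Setoid (ColoredSet m n)) : Type := {q : Quotient σ // q ≠ ⟦none⟧}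

lemma card_quotient_eq_card_freeBlock_add_one [NeZero m] :
    Nat.card (Quotient σ) = Nat.card (FreeBlock σ) + 1 := by
  classical
  rw [← Nat.card_congr (Equiv.optionSubtypeNe ⟦none⟧), Finite.card_option]

variable [hσ : Fact (IsColored σ)]

instance : AddAction (ZMod m) (FreeBlock σ) where
  vadd c q := ⟨Quotient.map' (shift c) (fun _ _ h => hσ.out.shift_rel_shift h c) q.1, by
    obtain ⟨⟨x⟩, hq⟩ := q
    exact fun h => hq (Quotient.sound (hσ.out.shift_rel_none_iff.1 (Quotient.exact h)))⟩
  zero_vadd := by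
    rintro ⟨⟨x⟩, hq⟩
    exact Subtype.ext (congrArg (Quotient.mk σ) (shift_zero x))
  add_vadd := by
    rintro c d ⟨⟨x⟩, hq⟩
    exact Subtype.ext (congrArg (Quotient.mk σ) (by rw [shift_shift, add_comm]))

lemma coe_vadd_eq_mk (c : ZMod m) (q : FreeBlock σ) {x : ColoredSet m n}
    (hx : ⟦x⟧ = (q : Quotient σ)) : ((c +ᵥ q : FreeBlock σ) : Quotient σ) = ⟦shift c x⟧ := by
  obtain ⟨q, hq⟩ := q
  subst hx
  rfl

lemma stabilizer_freeBlock_eq_bot (q : FreeBlock σ) : AddAction.stabilizer (ZMod m) q = ⊥ := by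
  refine (AddSubgroup.eq_bot_iff_forall _).2 fun c hc => ?_
  obtain ⟨⟨x⟩, hq⟩ := q
  exact hσ.out.2 c x (fun h => hq (Quotient.sound h)) (Quotient.exact (congrArg Subtype.val hc))

lemma card_freeBlock :
    Nat.card (FreeBlock σ) = Nat.card (AddAction.orbitRel.Quotient (ZMod m) (FreeBlock σ)) * m := by
  rw [Nat.card_congr (AddAction.selfEquivOrbitsQuotientProd stabilizer_freeBlock_eq_bot),
    Nat.card_prod, Nat.card_zmod]

abbrev BlockOrbit (σ : Setoid (ColoredSet m n)) [Fact (IsColored σ)] : Type :=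
  AddAction.orbitRel.Quotient (ZMod m) (FreeBlock σ)

noncomputable def orbitRep (O : BlockOrbit σ) : ColoredSet m n := O.out.1.out

lemma mk_orbitRep (O : BlockOrbit σ) : (⟦orbitRep O⟧ : Quotient σ) = O.out.1 :=
  Quotient.out_eq _

lemma orbitRep_not_rel_none (O : BlockOrbit σ) : ¬ σ.r (orbitRep O) none :=
  fun h => O.out.2 (by rw [← mk_orbitRep]; exact Quotient.sound h)

lemma exists_rel_shift_orbitRep {x : ColoredSet m n} (hx : ¬ σ.r x none) :
    ∃ (O : BlockOrbit σ) (c : ZMod m), σ.r x (shift c (orbitRep O)) := by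
  let q : FreeBlock σ := ⟨⟦x⟧, fun h => hx (Quotient.exact h)⟩
  obtain ⟨c, hc⟩ : ∃ c : ZMod m, c +ᵥ (⟦q⟧ : BlockOrbit σ).out = q :=
    Quotient.exact (Quotient.out_eq (⟦q⟧ : BlockOrbit σ)).symm
  refine ⟨⟦q⟧, c, Quotient.exact ?_⟩
  rw [← coe_vadd_eq_mk c _ (mk_orbitRep _), hc]

lemma eq_of_rel_shift_orbitRep {O O' : BlockOrbit σ} {c : ZMod m}
    (h : σ.r (orbitRep O) (shift c (orbitRep O'))) : O = O' := by
  have hc : c +ᵥ O'.out = O.out :=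
    Subtype.ext ((coe_vadd_eq_mk c _ (mk_orbitRep O')).trans
      ((Quotient.sound h).symm.trans (mk_orbitRep O)))
  rw [← Quotient.out_eq O, ← Quotient.out_eq O', ← hc]
  exact Quotient.sound ⟨c, rfl⟩

end FreeBlock

section OrbitBasis

variable [NeZero m] {σ : Setoid (ColoredSet m n)} [hσ : Fact (IsColored σ)]

lemma colorForm_orbitRep_blockVector_self (O : BlockOrbit σ) :
    colorForm (orbitRep O) (blockVector σ (orbitRep O)) = 1 :=
  colorForm_blockVector_self hσ.out (orbitRep_not_rel_none O)

lemma colorForm_orbitRep_blockVector_of_ne {O O' : BlockOrbit σ} (h : O ≠ O') :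
    colorForm (orbitRep O) (blockVector σ (orbitRep O')) = 0 :=
  colorForm_blockVector_of_forall_not_rel hσ.out fun _ hc => h (eq_of_rel_shift_orbitRep hc)

noncomputable def orbitEval : subspaceOf σ →ₗ[ℂ] (BlockOrbit σ → ℂ) :=
  LinearMap.pi fun O => (colorForm (orbitRep O)).comp (subspaceOf σ).subtype

lemma orbitEval_apply (v : subspaceOf σ) (O : BlockOrbit σ) :
    orbitEval v O = colorForm (orbitRep O) v :=
  rfl

lemma orbitEval_injective : Function.Injective (orbitEval (σ := σ)) := by
  rw [← LinearMap.ker_eq_bot, LinearMap.ker_eq_bot']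
  rintro ⟨v, hv⟩ h0
  have hzero : ∀ x : ColoredSet m n, colorForm x v = 0 := by
    intro x
    by_cases hx : σ.r x none
    · rw [hv x none hx, colorForm_none]
    · obtain ⟨O, c, hc⟩ := exists_rel_shift_orbitRep hx
      rw [hv _ _ hc, colorForm_shift, ← orbitEval_apply ⟨v, hv⟩, h0, Pi.zero_apply, mul_zero]
  ext j
  simpa using hzero (some (j, 0))

lemma orbitEval_surjective : Function.Surjective (orbitEval (σ := σ)) := by
  intro g
  have := Fintype.ofFinite (BlockOrbit σ)
  refine ⟨⟨∑ O, g O • blockVector σ (orbitRep O), Submodule.sum_mem _ fun O _ =>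
    Submodule.smul_mem _ _ (blockVector_mem_subspaceOf hσ.out (orbitRep_not_rel_none O))⟩, ?_⟩
  funext O
  rw [orbitEval_apply, map_sum, Finset.sum_eq_single O (fun O' _ h => by
      rw [map_smul, colorForm_orbitRep_blockVector_of_ne (Ne.symm h), smul_zero])
    (fun h => absurd (Finset.mem_univ O) h), map_smul, colorForm_orbitRep_blockVector_self,
    smul_eq_mul, mul_one]

lemma finrank_subspaceOf : Module.finrank ℂ (subspaceOf σ) = Nat.card (BlockOrbit σ) := by
  have := Fintype.ofFinite (BlockOrbit σ)
  rw [(LinearEquiv.ofBijective orbitEval ⟨orbitEval_injective, orbitEval_surjective⟩).finrank_eq,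
    Module.finrank_fintype_fun_eq_card, Nat.card_eq_fintype_card]

end OrbitBasis

theorem card_quotient_eq [NeZero m] {σ : Setoid (ColoredSet m n)} (hσ : IsColored σ) :
    Nat.card (Quotient σ) = m * Module.finrank ℂ (subspaceOf σ) + 1 := by
  have := Fact.mk hσ
  rw [card_quotient_eq_card_freeBlock_add_one, card_freeBlock, finrank_subspaceOf, mul_comm]

end ColoredSet

open ColoredSet in
theorem stmt16_general (m n : ℕ) (hm : 2 ≤ m) :
    (∃ f : {W : Submodule ℂ (Fin n → ℂ) // W ∈ BarInterLattice m n} ≃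
        {σ : Setoid (ColoredSet m n) // IsBarColored σ},
      ∀ W₁ W₂, W₂.1 ≤ W₁.1 ↔ (f W₁).1 ≤ (f W₂).1) ∧
    (∀ k : ℕ, k ≤ n →
      Nat.card {W : Submodule ℂ (Fin n → ℂ) //
          W ∈ BarInterLattice m n ∧ Module.finrank ℂ W = k}
        = SbarCount m n k) := by
  have : NeZero m := ⟨by omega⟩
  have : Fact (1 < m) := ⟨hm⟩
  let f : {W : Submodule ℂ (Fin n → ℂ) // W ∈ BarInterLattice m n} ≃
      {σ : Setoid (ColoredSet m n) // IsBarColored σ} :=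
    { toFun W := ⟨setoidOf W, isBarColored_setoidOf W.2⟩
      invFun σ := ⟨subspaceOf σ, subspaceOf_mem_barInterLattice σ.2⟩
      left_inv W := Subtype.ext (subspaceOf_setoidOf W.2)
      right_inv σ := Subtype.ext (setoidOf_subspaceOf σ.2.1) }
  refine ⟨⟨f, fun W₁ W₂ => ?_⟩, fun k _ => ?_⟩
  · change _ ↔ setoidOf W₁.1 ≤ setoidOf W₂.1
    rw [← le_subspaceOf_iff, subspaceOf_setoidOf W₁.2]
  have hcard (W : {W : Submodule ℂ (Fin n → ℂ) // W ∈ BarInterLattice m n}) :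
      Module.finrank ℂ W.1 = k ↔ Nat.card (Quotient (f W).1) = k * m + 1 := by
    change _ ↔ Nat.card (Quotient (setoidOf W.1)) = _
    rw [card_quotient_eq (isColored_setoidOf W.1), subspaceOf_setoidOf W.2, mul_comm k,
      Nat.add_right_cancel_iff, Nat.mul_left_cancel_iff (by omega)]
  exact Nat.card_congr <|
    (Equiv.subtypeSubtypeEquivSubtypeInter _ _).symm.trans <|
      (f.subtypeEquiv hcard).trans (Equiv.subtypeSubtypeEquivSubtypeInter _ _)

/-- for `m ≥ 2` and `n ≥ 1`, the intersection lattice `L̄(m,n)` ordered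
by reverse inclusion is order-isomorphic to the poset of colored set partitions of type
`(m̄,n)` ordered by refinement; consequently for every `0 ≤ k ≤ n`, the number of
subspaces in `L̄(m,n)` of dimension `k` equals `S̄(m,n,k)`. -/
theorem stmt16 (m n : ℕ) (hm : 2 ≤ m) (hn : 1 ≤ n) :
    (∃ f : {W : Submodule ℂ (Fin n → ℂ) // W ∈ BarInterLattice m n} ≃
        {σ : Setoid (ColoredSet m n) // IsBarColored σ},
      ∀ W₁ W₂, W₂.1 ≤ W₁.1 ↔ (f W₁).1 ≤ (f W₂).1) ∧
    (∀ k : ℕ, k ≤ n →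
      Nat.card {W : Submodule ℂ (Fin n → ℂ) //
          W ∈ BarInterLattice m n ∧ Module.finrank ℂ W = k}
        = SbarCount m n k) :=
  stmt16_general m n hm
end
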